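/- arXiv:0711.1151 — 3 statements merged into one kernel-verified Lean document; each statement's English description precedes it below -/
import Mathlib

section
/- Han's inequality: for discrete random variables X₁,…,Xₙ with finite joint entropy, (n-1)·H(X₁,…,Xₙ) ≤ ∑_{i=1}^n H(X_{[n]∖{i}}), where X_{[n]∖{i}} is the joint variable of all variables except X_i. -/
open Finset

/-- Probability that the discrete random variable `X` takes the value `v`,
where `p` is the probability mass function on the finite sample space `Ω`. -/
noncomputable def probOf {Ω S : Type*} [Fintype Ω] [DecidableEq S]
    (p : Ω → ℝ) (X : Ω → S) (v : S) : ℝ :=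
  ∑ ω ∈ univ.filter (fun ω => X ω = v), p ω

/-- Shannon entropy (base 2) of a discrete random variable. -/
noncomputable def H {Ω S : Type*} [Fintype Ω] [DecidableEq S]
    (p : Ω → ℝ) (X : Ω → S) : ℝ :=
  -∑ v ∈ univ.image X, probOf p X v * Real.logb 2 (probOf p X v)

/-- Conditional Shannon entropy `H(X | Y)`. -/
noncomputable def condH {Ω S T : Type*} [Fintype Ω] [DecidableEq S] [DecidableEq T]
    (p : Ω → ℝ) (X : Ω → S) (Y : Ω → T) : ℝ :=
  -∑ v ∈ univ.image (fun ω => (X ω, Y ω)),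
      probOf p (fun ω => (X ω, Y ω)) v *
        Real.logb 2 (probOf p (fun ω => (X ω, Y ω)) v / probOf p Y v.2)

/-- Joint entropy of the subfamily `(X i)_{i ∈ A}`. -/
noncomputable def jointH {Ω S : Type*} [Fintype Ω] [DecidableEq S] {n : ℕ}
    (p : Ω → ℝ) (X : Fin n → Ω → S) (A : Finset (Fin n)) : ℝ :=
  H p (fun ω (i : {i // i ∈ A}) => X i.1 ω)

/-- Conditional joint entropy `H(X_A | X_B)`. -/
noncomputable def condJointH {Ω S : Type*} [Fintype Ω] [DecidableEq S] {n : ℕ}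
    (p : Ω → ℝ) (X : Fin n → Ω → S) (A B : Finset (Fin n)) : ℝ :=
  condH p (fun ω (i : {i // i ∈ A}) => X i.1 ω) (fun ω (i : {i // i ∈ B}) => X i.1 ω)

/-!
Han's inequality is the instance `U = T = [n]` of a general fact about a submodular set
function `f` with `f ∅ = 0`: adding the coordinates of `T` one at a time,
`#T * f U + f (U \ T) ≤ ∑ i ∈ T, f (U \ {i}) + f U`, each step being one application of
submodularity to `U \ {j}` and `U \ T`. Joint entropy `A ↦ H(X_A)` is submodular because
`H(Z,X,Y) + H(Z) ≤ H(Z,X) + H(Z,Y)` (with `Z = X_{A∩B}`, `X = X_A`, `Y = X_B`), which is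
Gibbs' inequality for the ratio `r = p(z,x) p(z,y) / (p(z) p(z,x,y))`, whose mean is at most `1`.
-/

open Real

lemma mul_div_le_of_nonneg {K : Type*} [Field K] [LinearOrder K] [IsStrictOrderedRing K]
    {a b : K} (ha : 0 ≤ a) (hb : 0 ≤ b) : a * (b / a) ≤ b := by
  rcases ha.eq_or_lt with rfl | ha
  · simpa using hb
  · rw [mul_div_cancel₀ b ha.ne']

lemma sum_mul_logb_nonpos {ι : Type*} {s : Finset ι} {w r : ι → ℝ} {b : ℝ} (hb : 1 < b)
    (hw : ∀ i ∈ s, 0 ≤ w i) (hr : ∀ i ∈ s, 0 < w i → 0 < r i)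
    (hwr : ∑ i ∈ s, w i * r i ≤ ∑ i ∈ s, w i) :
    ∑ i ∈ s, w i * logb b (r i) ≤ 0 := by
  have hlog : ∑ i ∈ s, w i * log (r i) ≤ 0 :=
    calc ∑ i ∈ s, w i * log (r i) ≤ ∑ i ∈ s, (w i * r i - w i) := by
          refine sum_le_sum fun i hi => ?_
          rcases (hw i hi).eq_or_lt with hwi | hwi
          · simp [← hwi]
          · nlinarith [log_le_sub_one_of_pos (hr i hi hwi)]
      _ ≤ 0 := by rw [sum_sub_distrib]; linarith
  simp only [logb, ← mul_div_assoc, ← sum_div]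
  exact div_nonpos_of_nonpos_of_nonneg hlog (log_pos hb).le

lemma card_mul_add_le_sum_erase_add_of_submodular {α : Type*} [DecidableEq α]
    {f : Finset α → ℝ} (hf : ∀ A B, f (A ∪ B) + f (A ∩ B) ≤ f A + f B)
    {U T : Finset α} (hTU : T ⊆ U) :
    #T * f U + f (U \ T) ≤ ∑ i ∈ T, f (U.erase i) + f U := by
  induction T using Finset.induction_on with
  | empty => simp
  | insert j T hj ih =>
    have hjU : j ∈ U := hTU (mem_insert_self j T)
    have hsub := hf (U.erase j) (U \ T)
    have hinter : U.erase j ∩ (U \ T) = U \ insert j T := by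
      ext i; simp only [mem_inter, mem_erase, mem_sdiff, mem_insert]; tauto
    have hunion : U.erase j ∪ (U \ T) = U := by
      ext i; by_cases hij : i = j <;> simp_all
    rw [hunion, hinter] at hsub
    rw [sum_insert hj, card_insert_of_notMem hj]
    push_cast
    linarith [ih ((subset_insert j T).trans hTU)]

section Entropy

variable {Ω S T U : Type*} [Fintype Ω] [DecidableEq S] [DecidableEq T] [DecidableEq U]
  {p : Ω → ℝ}

lemma sum_probOf_mul (p : Ω → ℝ) (X : Ω → S) (F : S → ℝ) :
    ∑ v ∈ univ.image X, probOf p X v * F v = ∑ ω, p ω * F (X ω) := by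
  rw [← sum_fiberwise_of_maps_to (g := X) (t := univ.image X)
    (fun ω _ => mem_image_of_mem X (mem_univ ω))]
  refine sum_congr rfl fun v _ => ?_
  rw [probOf, sum_mul]
  exact sum_congr rfl fun ω hω => by rw [(mem_filter.1 hω).2]

lemma H_eq_neg_sum (p : Ω → ℝ) (X : Ω → S) :
    H p X = -∑ ω, p ω * logb 2 (probOf p X (X ω)) := by
  rw [H, sum_probOf_mul]

lemma H_congr {X : Ω → S} {Y : Ω → T} (hXY : ∀ ω ω', X ω' = X ω ↔ Y ω' = Y ω) :
    H p X = H p Y := by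
  simp only [H_eq_neg_sum, probOf, hXY]

lemma H_eq_zero_of_const (hsum : ∑ ω, p ω = 1) {X : Ω → S} (hX : ∀ ω ω', X ω' = X ω) :
    H p X = 0 := by
  have hone : ∀ ω, probOf p X (X ω) = 1 := fun ω => by
    rw [probOf, filter_true_of_mem fun ω' _ => hX ω ω', hsum]
  simp [H_eq_neg_sum, hone]

lemma probOf_nonneg (hp : ∀ ω, 0 ≤ p ω) (X : Ω → S) (v : S) : 0 ≤ probOf p X v :=
  sum_nonneg fun ω _ => hp ω

lemma probOf_apply_pos (hp : ∀ ω, 0 ≤ p ω) {ω : Ω} (hω : 0 < p ω) (X : Ω → S) :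
    0 < probOf p X (X ω) :=
  hω.trans_le (single_le_sum (fun ω' _ => hp ω') (by simp))

lemma sum_probOf_pair_eq_probOf_fst (p : Ω → ℝ) (Z : Ω → T) (X : Ω → S) (z : T) :
    ∑ x ∈ univ.image X, probOf p (fun ω => (Z ω, X ω)) (z, x) = probOf p Z z := by
  rw [probOf, ← sum_fiberwise_of_maps_to (g := X) (t := univ.image X)
    (fun ω _ => mem_image_of_mem X (mem_univ ω))]
  simp only [probOf, filter_filter, Prod.ext_iff]

lemma sum_probOf (hsum : ∑ ω, p ω = 1) (X : Ω → S) : ∑ v ∈ univ.image X, probOf p X v = 1 := by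
  simpa [hsum] using sum_probOf_mul p X fun _ => 1

lemma sum_probOf_mul_probOf_div_probOf_le_one (hp : ∀ ω, 0 ≤ p ω) (hsum : ∑ ω, p ω = 1)
    (Z : Ω → T) (X : Ω → S) (Y : Ω → U) :
    ∑ v ∈ univ.image (fun ω => (Z ω, X ω, Y ω)),
      probOf p (fun ω => (Z ω, X ω)) (v.1, v.2.1) * probOf p (fun ω => (Z ω, Y ω)) (v.1, v.2.2) /
        probOf p Z v.1 ≤ 1 := by
  have hsub : univ.image (fun ω => (Z ω, X ω, Y ω))
      ⊆ univ.image Z ×ˢ (univ.image X ×ˢ univ.image Y) := by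
    intro v hv
    obtain ⟨ω, -, rfl⟩ := mem_image.1 hv
    simp
  calc _ ≤ ∑ v ∈ univ.image Z ×ˢ (univ.image X ×ˢ univ.image Y),
        probOf p (fun ω => (Z ω, X ω)) (v.1, v.2.1) *
          probOf p (fun ω => (Z ω, Y ω)) (v.1, v.2.2) / probOf p Z v.1 :=
        sum_le_sum_of_subset_of_nonneg hsub fun v _ _ =>
          div_nonneg (mul_nonneg (probOf_nonneg hp _ _) (probOf_nonneg hp _ _)) (probOf_nonneg hp _ _)
    _ = ∑ z ∈ univ.image Z, (∑ x ∈ univ.image X, probOf p (fun ω => (Z ω, X ω)) (z, x)) *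
          (∑ y ∈ univ.image Y, probOf p (fun ω => (Z ω, Y ω)) (z, y)) / probOf p Z z := by
        rw [sum_product]
        refine sum_congr rfl fun z _ => ?_
        rw [sum_mul_sum, sum_div, sum_product]
        simp only [sum_div]
    _ = ∑ z ∈ univ.image Z, probOf p Z z := by
        simp only [sum_probOf_pair_eq_probOf_fst, mul_self_div_self]
    _ = 1 := sum_probOf hsum Z

lemma H_triple_add_H_le (hp : ∀ ω, 0 ≤ p ω) (hsum : ∑ ω, p ω = 1)
    (Z : Ω → T) (X : Ω → S) (Y : Ω → U) :
    H p (fun ω => (Z ω, X ω, Y ω)) + H p Z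
      ≤ H p (fun ω => (Z ω, X ω)) + H p (fun ω => (Z ω, Y ω)) := by
  set W := fun ω => (Z ω, X ω, Y ω)
  set t : T × S × U → ℝ := fun v => probOf p (fun ω => (Z ω, X ω)) (v.1, v.2.1) *
    probOf p (fun ω => (Z ω, Y ω)) (v.1, v.2.2) / probOf p Z v.1
  set r : Ω → ℝ := fun ω => t (W ω) / probOf p W (W ω)
  have hr : ∀ ω, 0 < p ω → 0 < r ω := fun ω hω =>
    div_pos (div_pos (mul_pos (probOf_apply_pos hp hω _) (probOf_apply_pos hp hω _))
      (probOf_apply_pos hp hω _)) (probOf_apply_pos hp hω _)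
  have hpr : ∑ ω, p ω * r ω ≤ ∑ ω, p ω :=
    calc ∑ ω, p ω * r ω = ∑ v ∈ univ.image W, probOf p W v * (t v / probOf p W v) :=
          (sum_probOf_mul p W fun v => t v / probOf p W v).symm
      _ ≤ ∑ v ∈ univ.image W, t v := sum_le_sum fun v _ => mul_div_le_of_nonneg
          (probOf_nonneg hp _ _) (div_nonneg (mul_nonneg (probOf_nonneg hp _ _)
            (probOf_nonneg hp _ _)) (probOf_nonneg hp _ _))
      _ ≤ ∑ ω, p ω := hsum ▸ sum_probOf_mul_probOf_div_probOf_le_one hp hsum Z X Y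
  have hterm : ∀ ω, p ω * logb 2 (r ω) = p ω * logb 2 (probOf p (fun ω => (Z ω, X ω)) (Z ω, X ω))
      + p ω * logb 2 (probOf p (fun ω => (Z ω, Y ω)) (Z ω, Y ω))
      - p ω * logb 2 (probOf p Z (Z ω)) - p ω * logb 2 (probOf p W (W ω)) := fun ω => by
    rcases (hp ω).eq_or_lt with hω | hω
    · simp [← hω]
    · have hq := probOf_apply_pos hp hω W
      have ha := probOf_apply_pos hp hω fun ω => (Z ω, X ω)
      have hb := probOf_apply_pos hp hω fun ω => (Z ω, Y ω)
      have hc := probOf_apply_pos hp hω Z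
      rw [logb_div (div_pos (mul_pos ha hb) hc).ne' hq.ne', logb_div (mul_pos ha hb).ne' hc.ne',
        logb_mul ha.ne' hb.ne']
      ring
  have gibbs := sum_mul_logb_nonpos one_lt_two (fun ω _ => hp ω) (fun ω _ => hr ω) hpr
  simp only [hterm, sum_sub_distrib, sum_add_distrib] at gibbs
  simp only [H_eq_neg_sum]
  linarith

lemma H_eq_jointH {R : Type*} [DecidableEq R] {n : ℕ} {Y : Ω → R} (X : Fin n → Ω → S)
    (A : Finset (Fin n)) (hY : ∀ ω ω', Y ω' = Y ω ↔ ∀ i ∈ A, X i ω' = X i ω) :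
    H p Y = jointH p X A :=
  H_congr fun ω ω' => by simp [hY, funext_iff]

lemma jointH_union_add_jointH_inter_le {n : ℕ} (hp : ∀ ω, 0 ≤ p ω) (hsum : ∑ ω, p ω = 1)
    (X : Fin n → Ω → S) (A B : Finset (Fin n)) :
    jointH p X (A ∪ B) + jointH p X (A ∩ B) ≤ jointH p X A + jointH p X B := by
  convert H_triple_add_H_le hp hsum (fun ω (i : {i // i ∈ A ∩ B}) => X i.1 ω)
    (fun ω (i : {i // i ∈ A}) => X i.1 ω) (fun ω (i : {i // i ∈ B}) => X i.1 ω) using 2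
  all_goals
    refine (H_eq_jointH X _ fun ω ω' => ?_).symm
    constructor <;> intro h <;> simp_all [funext_iff, Prod.ext_iff, or_imp, forall_and]

end Entropy

/-- Han's inequality: `(n-1)·H(X₁,…,Xₙ) ≤ ∑ᵢ H(X_{[n]∖{i}})`. -/
theorem han_inequality {Ω S : Type*} [Fintype Ω] [DecidableEq S] {n : ℕ}
    (p : Ω → ℝ) (hp : ∀ ω, 0 ≤ p ω) (hsum : ∑ ω, p ω = 1)
    (X : Fin n → Ω → S) :
    ((n : ℝ) - 1) * jointH p X univ ≤ ∑ i, jointH p X (univ.erase i) := by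
  have han := card_mul_add_le_sum_erase_add_of_submodular
    (jointH_union_add_jointH_inter_le hp hsum X) (subset_refl univ)
  have hempty : jointH p X ∅ = 0 := H_eq_zero_of_const hsum fun _ _ => Subsingleton.elim _ _
  rw [sdiff_self, bot_eq_empty, hempty, card_univ, Fintype.card_fin] at han
  linarith
end

section
/- Discrete Uniform Cover Inequality: if S is a finite nonempty subset of ℤⁿ and 𝒜 is a multiset of subsets of [n] in which every i ∈ [n] appears in at least k members (counting multiplicity), then |S|^k ≤ ∏_{A∈𝒜} |S_A|, where S_A is the image of S under the coordinate projection onto the coordinates in A. -/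
/-!
Induct on the set `I` of retained coordinates, proving the fractional form
`|S_I| ≤ ∏_{A ∈ 𝒜} |S_{A ∩ I}| ^ (1/k)`. To add a coordinate `a ∉ I`, slice `S` into the fibres
`S_t = {f ∈ S | f a = t}` and apply the induction hypothesis to each of them. For a set `A ∋ a`
the fibre projections partition the projection: `|S_{A ∩ (I ∪ {a})}| = ∑_t |(S_t)_{A ∩ I}|`, so
summing over `t` with Hölder's inequality (exponents `1/k`) on `k` such sets closes the induction;
every other factor is bounded by the corresponding projection of all of `S`.
-/

open Finset MeasureTheory
open scoped ENNReal

theorem ENNReal.sum_prod_rpow_le_prod_sum_rpow {κ ι : Type*} (T : Finset κ) (s : Finset ι)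
    (f : ι → κ → ℝ≥0∞) {p : ι → ℝ} (hp : ∑ i ∈ s, p i = 1) (hp₀ : ∀ i ∈ s, 0 ≤ p i) :
    ∑ t ∈ T, ∏ i ∈ s, f i t ^ p i ≤ ∏ i ∈ s, (∑ t ∈ T, f i t) ^ p i := by
  let _ : MeasurableSpace κ := ⊤
  have : MeasurableSingletonClass κ := ⟨fun _ => trivial⟩
  simpa [lintegral_finset] using lintegral_prod_norm_pow_le (μ := Measure.count.restrict T) s
    (fun i _ => (measurable_from_top (f := f i)).aemeasurable) hp hp₀

theorem ENNReal.sum_multiset_prod_rpow_inv_card_le {κ α : Type*} (T : Finset κ)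
    {m : Multiset α} (hm : m ≠ 0) (f : α → κ → ℝ≥0∞) :
    ∑ t ∈ T, (m.map fun a => f a t ^ (Multiset.card m : ℝ)⁻¹).prod ≤
      (m.map fun a => (∑ t ∈ T, f a t) ^ (Multiset.card m : ℝ)⁻¹).prod := by
  classical
  have prod_eq (g : α → ℝ≥0∞) : (m.map g).prod = ∏ x ∈ m.toEnumFinset, g x.1 := by
    conv_lhs => rw [← Multiset.map_toEnumFinset_fst m]
    rw [Multiset.map_map]
    rfl
  simp only [prod_eq]
  refine ENNReal.sum_prod_rpow_le_prod_sum_rpow T _ (fun (x : α × ℕ) t => f x.1 t) ?_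
    fun _ _ => by positivity
  rw [sum_const, Multiset.card_toEnumFinset, nsmul_eq_mul]
  exact mul_inv_cancel₀ (by simpa using hm)

theorem Multiset.exists_le_card_eq {α : Type*} {s : Multiset α} {n : ℕ}
    (hn : n ≤ Multiset.card s) : ∃ t ≤ s, Multiset.card t = n := by
  obtain ⟨t, ht⟩ := Multiset.card_pos_iff_exists_mem.1
    (by rw [Multiset.card_powersetCard]; exact Nat.choose_pos hn)
  exact ⟨t, Multiset.mem_powersetCard.1 ht⟩

namespace Finset

variable {ι β : Type*} [DecidableEq β]

theorem card_image_restrict_mono {A B : Finset ι} (hAB : A ⊆ B) (S : Finset (ι → β)) :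
    #(S.image A.restrict) ≤ #(S.image B.restrict) := by
  rw [← restrict₂_comp_restrict hAB, ← image_image]
  exact card_image_le

theorem card_image_restrict_empty_le_one (S : Finset (ι → β)) :
    #(S.image (∅ : Finset ι).restrict) ≤ 1 :=
  card_le_one.2 fun _ _ _ _ => Subsingleton.elim _ _

theorem card_image_restrict_univ [Fintype ι] (S : Finset (ι → β)) :
    #(S.image (univ : Finset ι).restrict) = #S :=
  card_image_of_injective _ fun _ _ h => funext fun i => congrFun h ⟨i, mem_univ i⟩

theorem one_le_prod_card_image_restrict {S : Finset (ι → β)} (hS : S.Nonempty)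
    (𝒜 : Multiset (Finset ι)) : 1 ≤ (𝒜.map fun A => #(S.image A.restrict)).prod :=
  Multiset.one_le_prod_of_one_le fun x hx => by
    obtain ⟨A, -, rfl⟩ := Multiset.mem_map.1 hx
    exact (hS.image _).card_pos

variable [DecidableEq ι]

theorem card_image_restrict_erase_of_forall_eq {J : Finset ι} {a : ι} (ha : a ∈ J) {b : β}
    {X : Finset (ι → β)} (hX : ∀ f ∈ X, f a = b) :
    #(X.image (J.erase a).restrict) = #(X.image J.restrict) := by
  rw [← restrict₂_comp_restrict (erase_subset a J), ← image_image]
  refine card_image_of_injOn ?_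
  simp only [coe_image, Set.InjOn, Set.mem_image, mem_coe, forall_exists_index, and_imp]
  rintro _ f hf rfl _ g hg rfl hfg
  funext ⟨i, hi⟩
  by_cases hia : i = a
  · subst hia
    simp [hX f hf, hX g hg]
  · exact congrFun hfg ⟨i, mem_erase.2 ⟨hia, hi⟩⟩

theorem card_image_restrict_eq_sum_fiber {J : Finset ι} {a : ι} (ha : a ∈ J)
    (S : Finset (ι → β)) :
    #(S.image J.restrict) =
      ∑ b ∈ S.image (· a), #((S.filter (· a = b)).image (J.erase a).restrict) := by
  rw [card_eq_sum_card_fiberwise (f := fun g => g ⟨a, ha⟩) (t := S.image (· a))]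
  · refine sum_congr rfl fun b _ => ?_
    rw [filter_image, card_image_restrict_erase_of_forall_eq ha fun f hf => (mem_filter.1 hf).2]
    rfl
  · intro g hg
    obtain ⟨f, hf, rfl⟩ := mem_image.1 hg
    exact mem_image_of_mem _ hf

theorem card_image_restrict_insert_le_prod_rpow {k : ℕ} (hk : k ≠ 0)
    {𝒜 : Multiset (Finset ι)} {I : Finset ι} {a : ι} (ha : a ∉ I)
    (hcov : k ≤ Multiset.card (𝒜.filter (a ∈ ·)))
    (ih : ∀ S : Finset (ι → β), (#(S.image I.restrict) : ℝ≥0∞) ≤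
      (𝒜.map fun A => (#(S.image (A ∩ I).restrict) : ℝ≥0∞) ^ (k⁻¹ : ℝ)).prod)
    (S : Finset (ι → β)) :
    (#(S.image (insert a I).restrict) : ℝ≥0∞) ≤
      (𝒜.map fun A => (#(S.image (A ∩ insert a I).restrict) : ℝ≥0∞) ^ (k⁻¹ : ℝ)).prod := by
  set T := S.image (· a)
  set N : Finset ι → ℝ≥0∞ := fun A => #(S.image (A ∩ insert a I).restrict)
  set c : Finset ι → β → ℝ≥0∞ := fun A t => #((S.filter (· a = t)).image (A ∩ I).restrict)
  -- Hölder needs exponents summing to one, so only `k` of the sets containing `a` enter it.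
  obtain ⟨𝒜₁, h𝒜₁, hcard⟩ := Multiset.exists_le_card_eq hcov
  obtain ⟨𝒜₂, rfl⟩ := Multiset.le_iff_exists_add.1 (h𝒜₁.trans (Multiset.filter_le _ _))
  have hc_le (A : Finset ι) (t : β) : c A t ≤ N A := by
    simp only [c, N, Nat.cast_le]
    exact (card_le_card (image_subset_image (filter_subset _ S))).trans
      (card_image_restrict_mono (inter_subset_inter_left (subset_insert a I)) S)
  have hN_eq (A : Finset ι) (hA : A ∈ 𝒜₁) : N A = ∑ t ∈ T, c A t := by
    have haA : a ∈ A := (Multiset.mem_filter.1 (Multiset.mem_of_le h𝒜₁ hA)).2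
    simp only [c, N]
    rw [card_image_restrict_eq_sum_fiber (mem_inter.2 ⟨haA, mem_insert_self a I⟩), ← inter_erase,
      erase_insert ha]
    push_cast
    rfl
  calc (#(S.image (insert a I).restrict) : ℝ≥0∞)
      = ∑ t ∈ T, (#((S.filter (· a = t)).image I.restrict) : ℝ≥0∞) := by
        rw [card_image_restrict_eq_sum_fiber (mem_insert_self a I), erase_insert ha]
        push_cast
        rfl
    _ ≤ ∑ t ∈ T, ((𝒜₁ + 𝒜₂).map fun A => c A t ^ (k⁻¹ : ℝ)).prod :=
        sum_le_sum fun t _ => ih _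
    _ ≤ ∑ t ∈ T, (𝒜₁.map fun A => c A t ^ (k⁻¹ : ℝ)).prod *
          (𝒜₂.map fun A => N A ^ (k⁻¹ : ℝ)).prod := by
        gcongr with t _
        rw [Multiset.map_add, Multiset.prod_add]
        gcongr (_ * ?_)
        exact Multiset.prod_map_le_prod_map _ _ fun A _ => by gcongr; exact hc_le A t
    _ = (∑ t ∈ T, (𝒜₁.map fun A => c A t ^ (k⁻¹ : ℝ)).prod) *
          (𝒜₂.map fun A => N A ^ (k⁻¹ : ℝ)).prod :=
        (sum_mul ..).symm
    _ ≤ (𝒜₁.map fun A => (∑ t ∈ T, c A t) ^ (k⁻¹ : ℝ)).prod *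
          (𝒜₂.map fun A => N A ^ (k⁻¹ : ℝ)).prod := by
        gcongr
        have h𝒜₁_ne : 𝒜₁ ≠ 0 := by
          rintro rfl
          exact hk hcard.symm
        simpa [hcard] using ENNReal.sum_multiset_prod_rpow_inv_card_le T h𝒜₁_ne c
    _ = ((𝒜₁ + 𝒜₂).map fun A => N A ^ (k⁻¹ : ℝ)).prod := by
        rw [Multiset.map_add, Multiset.prod_add,
          Multiset.map_congr rfl fun A hA => by rw [← hN_eq A hA]]

theorem card_image_restrict_le_prod_rpow {k : ℕ} (hk : k ≠ 0) (𝒜 : Multiset (Finset ι))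
    (I : Finset ι) (hcov : ∀ i ∈ I, k ≤ Multiset.card (𝒜.filter (i ∈ ·)))
    (S : Finset (ι → β)) :
    (#(S.image I.restrict) : ℝ≥0∞) ≤
      (𝒜.map fun A => (#(S.image (A ∩ I).restrict) : ℝ≥0∞) ^ (k⁻¹ : ℝ)).prod := by
  induction I using Finset.induction_on generalizing S with
  | empty =>
    rcases S.eq_empty_or_nonempty with rfl | hS
    · simp
    calc (#(S.image (∅ : Finset ι).restrict) : ℝ≥0∞) ≤ 1 := by
          exact_mod_cast card_image_restrict_empty_le_one S
      _ ≤ _ := Multiset.one_le_prod_of_one_le fun x hx => by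
          obtain ⟨A, -, rfl⟩ := Multiset.mem_map.1 hx
          exact ENNReal.one_le_rpow (by exact_mod_cast (hS.image _).card_pos) (by positivity)
  | insert a I ha ih =>
    exact card_image_restrict_insert_le_prod_rpow hk ha (hcov a (mem_insert_self a I))
      (ih fun i hi => hcov i (mem_insert_of_mem hi)) S

theorem card_pow_le_prod_card_image_restrict [Fintype ι] {k : ℕ} (S : Finset (ι → β))
    (hS : S.Nonempty) (𝒜 : Multiset (Finset ι))
    (hcov : ∀ i, k ≤ Multiset.card (𝒜.filter (i ∈ ·))) :
    #S ^ k ≤ (𝒜.map fun A => #(S.image A.restrict)).prod := by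
  rcases eq_or_ne k 0 with rfl | hk
  · simpa using one_le_prod_card_image_restrict hS 𝒜
  have hroot := card_image_restrict_le_prod_rpow hk 𝒜 univ (fun i _ => hcov i) S
  rw [card_image_restrict_univ, Multiset.map_congr rfl fun A _ => by rw [inter_univ]] at hroot
  rw [← Nat.cast_le (α := ℝ≥0∞), Nat.cast_pow, Nat.cast_multiset_prod, Multiset.map_map]
  calc (#S : ℝ≥0∞) ^ k ≤ (𝒜.map fun A => (#(S.image A.restrict) : ℝ≥0∞) ^ (k⁻¹ : ℝ)).prod ^ k :=
        pow_le_pow_left' hroot k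
    _ = _ := by simp [← Multiset.prod_map_pow, ENNReal.rpow_inv_natCast_pow hk]

end Finset

/-- Discrete Uniform Cover Inequality: if every `i` lies in at least `k` members of
`𝒜` (with multiplicity), then `|S|^k ≤ ∏_{A∈𝒜} |S_A|`, where `S_A` is the projection
of `S ⊆ ℤⁿ` onto the coordinates in `A`. -/
theorem discrete_uniform_cover_inequality {n k : ℕ}
    (S : Finset (Fin n → ℤ)) (hS : S.Nonempty)
    (𝒜 : Multiset (Finset (Fin n)))
    (hcov : ∀ i : Fin n, k ≤ Multiset.card (𝒜.filter (fun A => i ∈ A))) :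
    S.card ^ k ≤
      (𝒜.map (fun A => (S.image (fun f (i : {i // i ∈ A}) => f i.1)).card)).prod :=
  card_pow_le_prod_card_image_restrict S hS 𝒜 hcov
end

section
/- Sharpness of the sumset inequality: there exist finite sets of integers A, B₁,…,B_k and C ⊆ B₁+⋯+B_k achieving equality |A+C|^k = |C|^{k-1} ∏_{i=1}^k |A+B_i|; for example A = {1,…,n}, C = B₁ = {0,n}, B₂ = ⋯ = B_k = {0} gives |A+C| = 2n, |C| = 2, |A+B₁| = 2n, |A+B_i| = n for i ≥ 2. -/
open Finset Pointwise

theorem Fintype.prod_ite_eq_mul_pow {ι M : Type*} [Fintype ι] [DecidableEq ι] [CommMonoid M]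
    (j : ι) (a b : M) :
    ∏ i, (if i = j then a else b) = a * b ^ (Fintype.card ι - 1) := by
  rw [← mul_prod_erase univ _ (mem_univ j), if_pos rfl,
    prod_ite_of_false (fun i hi => ne_of_mem_erase hi), prod_const,
    card_erase_of_mem (mem_univ j), card_univ]

theorem Finset.sum_ite_eq_zero_singleton {ι M : Type*} [Fintype ι] [DecidableEq ι]
    [DecidableEq M] [AddCommMonoid M] (j : ι) (s : Finset M) :
    ∑ i, (if i = j then s else {0}) = s := by
  simp only [singleton_zero, Fintype.sum_ite_eq']

theorem Int.Icc_one_add_pair (m : ℤ) : Icc 1 m + {0, m} = Icc 1 (2 * m) := by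
  ext x
  simp only [mem_add, mem_Icc, mem_insert, mem_singleton]
  constructor
  · rintro ⟨a, ha, c, rfl | rfl, rfl⟩ <;> omega
  · intro hx
    by_cases h : x ≤ m
    · exact ⟨x, by omega, 0, .inl rfl, add_zero x⟩
    · exact ⟨x - m, by omega, m, .inr rfl, sub_add_cancel x m⟩

theorem Int.card_Icc_one_add_pair (n : ℕ) : (Icc (1 : ℤ) n + {0, (n : ℤ)}).card = 2 * n := by
  rw [Int.Icc_one_add_pair, Int.card_Icc]
  omega

/-- Sharpness of the sumset inequality: with `A = {1,…,n}`, `C = B₁ = {0,n}`,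
`B₂ = ⋯ = B_k = {0}` one gets `|A+C| = 2n`, `|C| = 2`, `|A+B₁| = 2n`,
`|A+Bᵢ| = n` for `i ≥ 2`, and equality `|A+C|^k = |C|^{k-1} ∏ᵢ |A+Bᵢ|`. -/
theorem sumset_GyMR_sharp {n k : ℕ} (hn : 0 < n) (hk : 0 < k)
    (A C : Finset ℤ) (B : Fin k → Finset ℤ)
    (hA : A = Finset.Icc (1 : ℤ) (n : ℤ)) (hC : C = {0, (n : ℤ)})
    (hB : B = fun i => if i = ⟨0, hk⟩ then ({0, (n : ℤ)} : Finset ℤ) else {0}) :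
    C ⊆ ∑ i, B i ∧
    (A + C).card = 2 * n ∧ C.card = 2 ∧ (A + B ⟨0, hk⟩).card = 2 * n ∧
    (∀ i, i ≠ ⟨0, hk⟩ → (A + B i).card = n) ∧
    (A + C).card ^ k = C.card ^ (k - 1) * ∏ i, (A + B i).card := by
  subst hA hC hB
  have hAC := Int.card_Icc_one_add_pair n
  have hC : ({0, (n : ℤ)} : Finset ℤ).card = 2 := card_pair (by omega)
  have hA : (Icc (1 : ℤ) n + {0}).card = n := by
    rw [singleton_zero, add_zero, Int.card_Icc]
    omega
  have hAB : ∀ i : Fin k, (Icc (1 : ℤ) n + if i = ⟨0, hk⟩ then {0, (n : ℤ)} else {0}).card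
      = if i = ⟨0, hk⟩ then 2 * n else n := fun i => by
    split_ifs
    exacts [hAC, hA]
  refine ⟨(sum_ite_eq_zero_singleton _ _).ge, hAC, hC, (hAB _).trans (if_pos rfl),
    fun i hi => (hAB i).trans (if_neg hi), ?_⟩
  rw [Fintype.prod_congr _ _ hAB, Fintype.prod_ite_eq_mul_pow, Fintype.card_fin, hAC, hC]
  obtain ⟨m, rfl⟩ := Nat.exists_eq_add_of_lt hk
  simp only [zero_add, Nat.add_sub_cancel]
  ring
end
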